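/- Let M ≥ 1, let D, L ∈ ℂ^{M×M} with D diagonal and L strictly lower-triangular, suppose R = D + L + Lᴴ is positive definite Hermitian, and let ω be a real number with 0 < ω < 2. Let λ ∈ ℂ and v ∈ ℂ^M with v ≠ 0 satisfy ((ω−1)·D + ω·Lᴴ)·v = λ·(D + ω·L)·v (i.e., v is an eigenvector of the SOR iteration matrix T^ω = (D+ωL)⁻¹·((ω−1)D + ωLᴴ) with eigenvalue λ). Set β = vᴴ·D·v (a positive real number), a = Re(vᴴ·L·v), b = Im(vᴴ·L·v). Then β + ω·(vᴴ·L·v) ≠ 0, λ·(β + ω·(a + i·b)) = (ω−1)·β + ω·(a − i·b), and |λ|² = (((ω−1)·β + ω·a)² + (ω·b)²)/((β + ω·a)² + (ω·b)²). -/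

import Mathlib

open Matrix
open scoped ComplexOrder

/-!
Pairing the eigen-equation with `v` turns it into the scalar identity
`λ (β + ω c) = (ω - 1) β + ω c̄` with `c = vᴴ L v`, and `β = vᴴ D v > 0` because `D` is the
diagonal part of a positive definite matrix. Positive definiteness of `R` at `v` gives
`β + 2 Re c > 0`, so for `0 < ω < 2` the convex combination `β + ω Re c` of `β` and `β + 2 Re c`
is positive; the scalar identity can therefore be divided, and taking norms gives `|λ|²`.
-/

namespace Matrix

variable {n R : Type*}

theorem star_dotProduct_conjTranspose_mulVec [Fintype n] [CommSemiring R] [StarRing R]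
    (A : Matrix n n R) (v : n → R) :
    star v ⬝ᵥ (Aᴴ *ᵥ v) = star (star v ⬝ᵥ (A *ᵥ v)) := by
  rw [star_dotProduct, star_mulVec, conjTranspose_conjTranspose, ← dotProduct_mulVec]

theorem mul_star_dotProduct_of_sor_eigen [Fintype n] [CommRing R] [StarRing R]
    {D L : Matrix n n R} {ω lam : R} {v : n → R}
    (h : ((ω - 1) • D + ω • Lᴴ) *ᵥ v = lam • ((D + ω • L) *ᵥ v)) :
    lam * (star v ⬝ᵥ (D *ᵥ v) + ω * (star v ⬝ᵥ (L *ᵥ v)))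
      = (ω - 1) * (star v ⬝ᵥ (D *ᵥ v)) + ω * star (star v ⬝ᵥ (L *ᵥ v)) := by
  have h' := congrArg (star v ⬝ᵥ ·) h
  simp only [add_mulVec, smul_mulVec, dotProduct_add, dotProduct_smul, smul_eq_mul,
    star_dotProduct_conjTranspose_mulVec] at h'
  exact h'.symm

theorem IsDiag.posDef_of_posDef_add_add_conjTranspose [CommRing R] [PartialOrder R]
    [StarRing R] [StarOrderedRing R] [NoZeroDivisors R] [Nontrivial R] [DecidableEq n]
    {D L : Matrix n n R} (hD : D.IsDiag) (hL : ∀ i, L i i = 0) (hR : (D + L + Lᴴ).PosDef) :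
    D.PosDef := by
  rw [← hD.diagonal_diag]
  exact posDef_diagonal_iff.mpr fun i => by simpa [hL i] using hR.diag_pos (i := i)

end Matrix

theorem Complex.sq_norm_eq_normSq_div_of_mul_eq {z w u : ℂ} (h : z * w = u) (hw : w ≠ 0) :
    ‖z‖ ^ 2 = normSq u / normSq w := by
  rw [Complex.sq_norm, ← normSq_div, ← h, mul_div_cancel_right₀ _ hw]

theorem sor_eigenvalue_formula_general
    (M : ℕ) (D L : Matrix (Fin M) (Fin M) ℂ)
    (hDdiag : D.IsDiag) (hLlow : ∀ i j : Fin M, i ≤ j → L i j = 0)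
    (hR : (D + L + Lᴴ).PosDef)
    (ω : ℝ) (hω0 : 0 < ω) (hω2 : ω < 2)
    (lam : ℂ) (v : Fin M → ℂ) (hv : v ≠ 0)
    (heig : (((ω : ℂ) - 1) • D + (ω : ℂ) • Lᴴ) *ᵥ v = lam • ((D + (ω : ℂ) • L) *ᵥ v))
    (β a b : ℝ)
    (hβ : β = (star v ⬝ᵥ (D *ᵥ v)).re)
    (ha : a = (star v ⬝ᵥ (L *ᵥ v)).re)
    (hb : b = (star v ⬝ᵥ (L *ᵥ v)).im) :
    star v ⬝ᵥ (D *ᵥ v) = (β : ℂ) ∧ 0 < β ∧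
    (β : ℂ) + (ω : ℂ) * (star v ⬝ᵥ (L *ᵥ v)) ≠ 0 ∧
    lam * ((β : ℂ) + (ω : ℂ) * ((a : ℂ) + Complex.I * (b : ℂ)))
      = ((ω : ℂ) - 1) * (β : ℂ) + (ω : ℂ) * ((a : ℂ) - Complex.I * (b : ℂ)) ∧
    ‖lam‖ ^ 2
      = (((ω - 1) * β + ω * a) ^ 2 + (ω * b) ^ 2) / ((β + ω * a) ^ 2 + (ω * b) ^ 2) := by
  have hDv := (hDdiag.posDef_of_posDef_add_add_conjTranspose (fun i => hLlow i i le_rfl) hR)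
    |>.dotProduct_mulVec_pos hv
  obtain ⟨hβpos, hDim⟩ := Complex.pos_iff.mp hDv
  rw [← hβ] at hβpos
  have hcD : star v ⬝ᵥ (D *ᵥ v) = β := Complex.ext (by simp [hβ]) (by simp [← hDim])
  have hcL : star v ⬝ᵥ (L *ᵥ v) = a + Complex.I * b := by
    rw [ha, hb, mul_comm, Complex.re_add_im]
  have hstar : star (star v ⬝ᵥ (L *ᵥ v)) = a - Complex.I * b := by
    rw [hcL]; apply Complex.ext <;> simp
  have hRv : 0 < β + 2 * a := by
    have h := (Complex.pos_iff.mp (hR.dotProduct_mulVec_pos hv)).1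
    simp only [add_mulVec, dotProduct_add, star_dotProduct_conjTranspose_mulVec, hcD] at h
    simpa [ha, two_mul, add_assoc] using h
  have hden_re : 0 < β + ω * a := by nlinarith
  have hden : (β : ℂ) + ω * star v ⬝ᵥ (L *ᵥ v) ≠ 0 := fun h => by
    simpa [hcL, hden_re.ne'] using congrArg Complex.re h
  have hkey := mul_star_dotProduct_of_sor_eigen heig
  rw [hcD, hstar] at hkey
  refine ⟨hcD, hβpos, hden, hcL ▸ hkey, ?_⟩
  rw [Complex.sq_norm_eq_normSq_div_of_mul_eq hkey hden, hcL]
  congr 1 <;> simp [Complex.normSq_apply] <;> ring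

/-- Formula for an eigenvalue of the SOR iteration matrix of a positive definite
Hermitian matrix `R = D + L + Lᴴ` with relaxation parameter `0 < ω < 2`. -/
theorem sor_eigenvalue_formula
    (M : ℕ) (hM : 1 ≤ M) (D L : Matrix (Fin M) (Fin M) ℂ)
    (hDdiag : D.IsDiag) (hLlow : ∀ i j : Fin M, i ≤ j → L i j = 0)
    (hR : (D + L + Lᴴ).PosDef)
    (ω : ℝ) (hω0 : 0 < ω) (hω2 : ω < 2)
    (lam : ℂ) (v : Fin M → ℂ) (hv : v ≠ 0)
    (heig : (((ω : ℂ) - 1) • D + (ω : ℂ) • Lᴴ) *ᵥ v = lam • ((D + (ω : ℂ) • L) *ᵥ v))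
    (β a b : ℝ)
    (hβ : β = (star v ⬝ᵥ (D *ᵥ v)).re)
    (ha : a = (star v ⬝ᵥ (L *ᵥ v)).re)
    (hb : b = (star v ⬝ᵥ (L *ᵥ v)).im) :
    star v ⬝ᵥ (D *ᵥ v) = (β : ℂ) ∧ 0 < β ∧
    (β : ℂ) + (ω : ℂ) * (star v ⬝ᵥ (L *ᵥ v)) ≠ 0 ∧
    lam * ((β : ℂ) + (ω : ℂ) * ((a : ℂ) + Complex.I * (b : ℂ)))
      = ((ω : ℂ) - 1) * (β : ℂ) + (ω : ℂ) * ((a : ℂ) - Complex.I * (b : ℂ)) ∧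
    ‖lam‖ ^ 2
      = (((ω - 1) * β + ω * a) ^ 2 + (ω * b) ^ 2) / ((β + ω * a) ^ 2 + (ω * b) ^ 2) :=
  sor_eigenvalue_formula_general M D L hDdiag hLlow hR ω hω0 hω2 lam v hv heig β a b hβ ha hb
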